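/- arXiv:1009.6022 — 7 statements merged into one kernel-verified Lean document; each statement's English description precedes it below -/
import Mathlib

section
/- If p = Σ_{i=0}^N c_i x^i is a real polynomial of degree N ≥ 3 with all c_i > 0 and c_i^2 ≥ 4 c_{i+1} c_{i-1} for all 1 ≤ i ≤ N−1, then all roots of p are real, simple, and negative. -/
open Polynomial Finset

/-!
Write `r i = c (i + 1) / c i`; the hypothesis `β_i ≥ 4` says `4 * r (i + 1) ≤ r i`. Hence for
every `k ≤ N` there is a point `t_k > 0` at which the terms `c i * t_k ^ i` at least double from
each index to the next up to `i = k` and at least halve after it. In `(-1) ^ k * p (-t_k)` the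
`k`-th term then outweighs the two alternating tails on either side of it, each of which is at
most half of it, and for `N ≥ 3` one of the two comparisons is strict. As `t_0 < t_1 < ⋯ < t_N`,
the values of `p` at `-t_0 > -t_1 > ⋯ > -t_N` alternate in sign, which produces `N` distinct
negative real roots: all the roots of `p`, since `p` has degree `N`.
-/

section AlternatingSums

variable {a : ℕ → ℝ}

lemma alternating_sum_rising_succ (m : ℕ) :
    ∑ i ∈ range (m + 2), (-1) ^ (m + 1 + i) * a i
      = a (m + 1) - ∑ i ∈ range (m + 1), (-1) ^ (m + i) * a i := by
  rw [sum_range_succ, ← two_mul, pow_mul, neg_one_sq, one_pow, one_mul, sub_eq_neg_add,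
    ← sum_neg_distrib]
  exact congrArg (· + a (m + 1)) (sum_congr rfl fun i _ => by ring)

lemma alternating_sum_rising_pos_and_le {m : ℕ} (hpos : ∀ i ≤ m, 0 < a i)
    (hrise : ∀ i < m, a i < a (i + 1)) :
    0 < ∑ i ∈ range (m + 1), (-1) ^ (m + i) * a i ∧
      ∑ i ∈ range (m + 1), (-1) ^ (m + i) * a i ≤ a m := by
  induction m with
  | zero => simp [hpos 0 le_rfl]
  | succ m ih =>
    obtain ⟨h0, h1⟩ := ih (fun i hi => hpos i (by omega)) (fun i hi => hrise i (by omega))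
    rw [alternating_sum_rising_succ]
    have := hrise m (by omega)
    constructor <;> linarith

lemma alternating_sum_rising_lt {m : ℕ} (hm : 0 < m) (hpos : ∀ i ≤ m, 0 < a i)
    (hrise : ∀ i < m, a i < a (i + 1)) :
    ∑ i ∈ range (m + 1), (-1) ^ (m + i) * a i < a m := by
  obtain ⟨m, rfl⟩ : ∃ m', m = m' + 1 := ⟨m - 1, by omega⟩
  rw [alternating_sum_rising_succ]
  linarith [(alternating_sum_rising_pos_and_le (m := m) (fun i hi => hpos i (by omega))
    (fun i hi => hrise i (by omega))).1]

lemma alternating_sum_falling_succ (m : ℕ) :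
    ∑ i ∈ range (m + 2), (-1) ^ i * a i
      = a 0 - ∑ i ∈ range (m + 1), (-1) ^ i * a (i + 1) := by
  rw [sum_range_succ', sub_eq_neg_add, ← sum_neg_distrib]
  simp [pow_succ]

lemma alternating_sum_falling_pos_and_le {m : ℕ} (hpos : ∀ i ≤ m, 0 < a i)
    (hfall : ∀ i < m, a (i + 1) < a i) :
    0 < ∑ i ∈ range (m + 1), (-1) ^ i * a i ∧
      ∑ i ∈ range (m + 1), (-1) ^ i * a i ≤ a 0 := by
  induction m generalizing a with
  | zero => simp [hpos 0 le_rfl]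
  | succ m ih =>
    obtain ⟨h0, h1⟩ := ih (a := fun i => a (i + 1)) (fun i hi => hpos (i + 1) (by omega))
      (fun i hi => hfall (i + 1) (by omega))
    rw [alternating_sum_falling_succ]
    have := hfall 0 (by omega)
    constructor <;> linarith

lemma alternating_sum_falling_lt {m : ℕ} (hm : 0 < m) (hpos : ∀ i ≤ m, 0 < a i)
    (hfall : ∀ i < m, a (i + 1) < a i) :
    ∑ i ∈ range (m + 1), (-1) ^ i * a i < a 0 := by
  obtain ⟨m, rfl⟩ : ∃ m', m = m' + 1 := ⟨m - 1, by omega⟩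
  rw [alternating_sum_falling_succ]
  linarith [(alternating_sum_falling_pos_and_le (a := fun i => a (i + 1)) (m := m)
    (fun i hi => hpos (i + 1) (by omega)) (fun i hi => hfall (i + 1) (by omega))).1]

lemma half_add_alternating_sum_below_peak {k : ℕ} (hpos : ∀ i ≤ k, 0 < a i)
    (hrise : ∀ i < k, 2 * a i ≤ a (i + 1)) :
    0 ≤ a k / 2 + ∑ i ∈ range k, (-1) ^ (k + i) * a i ∧
      (k ≠ 1 → 0 < a k / 2 + ∑ i ∈ range k, (-1) ^ (k + i) * a i) := by
  rcases k with _ | k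
  · have h := hpos 0 le_rfl
    simp only [range_zero, sum_empty, add_zero]
    exact ⟨(half_pos h).le, fun _ => half_pos h⟩
  have hflip : ∑ i ∈ range (k + 1), (-1) ^ (k + 1 + i) * a i
      = -∑ i ∈ range (k + 1), (-1) ^ (k + i) * a i := by
    rw [← sum_neg_distrib]
    exact sum_congr rfl fun i _ => by ring
  have hpos' : ∀ i ≤ k, 0 < a i := fun i hi => hpos i (by omega)
  have hstrict : ∀ i < k, a i < a (i + 1) := fun i hi => by
    linarith [hrise i (by omega), hpos i (by omega)]
  have hpeak := hrise k (by omega)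
  rw [hflip]
  refine ⟨by linarith [(alternating_sum_rising_pos_and_le hpos' hstrict).2], fun hk => ?_⟩
  linarith [alternating_sum_rising_lt (by omega) hpos' hstrict]

lemma half_add_alternating_sum_above_peak {k m : ℕ} (hpos : ∀ i ≤ k + m, 0 < a i)
    (hfall : ∀ i, k ≤ i → i < k + m → 2 * a (i + 1) ≤ a i) :
    0 ≤ a k / 2 + ∑ t ∈ range m, (-1) ^ (k + (k + 1 + t)) * a (k + 1 + t) ∧
      (m ≠ 1 → 0 < a k / 2 + ∑ t ∈ range m, (-1) ^ (k + (k + 1 + t)) * a (k + 1 + t)) := by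
  rcases m with _ | m
  · have h := hpos k (by omega)
    simp only [range_zero, sum_empty, add_zero]
    exact ⟨(half_pos h).le, fun _ => half_pos h⟩
  have hflip : ∑ t ∈ range (m + 1), (-1) ^ (k + (k + 1 + t)) * a (k + 1 + t)
      = -∑ t ∈ range (m + 1), (-1) ^ t * a (k + 1 + t) := by
    rw [← sum_neg_distrib]
    refine sum_congr rfl fun t _ => ?_
    rw [show k + (k + 1 + t) = 2 * k + t + 1 by ring, pow_succ, pow_add, pow_mul, neg_one_sq,
      one_pow, one_mul]
    ring
  have hpos' : ∀ t ≤ m, 0 < a (k + 1 + t) := fun t ht => hpos _ (by omega)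
  have hstrict : ∀ t < m, a (k + 1 + (t + 1)) < a (k + 1 + t) := fun t ht =>
    show a (k + 1 + t + 1) < a (k + 1 + t) by
      linarith [hfall (k + 1 + t) (by omega) (by omega), hpos (k + 1 + t + 1) (by omega)]
  have hpeak := hfall k le_rfl (by omega)
  rw [hflip]
  refine ⟨by linarith [(alternating_sum_falling_pos_and_le (a := fun t => a (k + 1 + t))
    hpos' hstrict).2], fun hm => ?_⟩
  linarith [alternating_sum_falling_lt (a := fun t => a (k + 1 + t)) (by omega) hpos' hstrict]

lemma alternating_sum_pos_of_halving_peak {n k : ℕ} (hn : 3 ≤ n) (hk : k ≤ n)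
    (hpos : ∀ i ≤ n, 0 < a i) (hrise : ∀ i < k, 2 * a i ≤ a (i + 1))
    (hfall : ∀ i, k ≤ i → i < n → 2 * a (i + 1) ≤ a i) :
    0 < ∑ i ∈ range (n + 1), (-1) ^ (k + i) * a i := by
  obtain ⟨m, rfl⟩ := Nat.exists_eq_add_of_le hk
  obtain ⟨hlow, hlow'⟩ :=
    half_add_alternating_sum_below_peak (fun i hi => hpos i (by omega)) hrise
  obtain ⟨hup, hup'⟩ := half_add_alternating_sum_above_peak hpos hfall
  rw [show k + m + 1 = k + 1 + m by omega, sum_range_add, sum_range_succ, ← two_mul, pow_mul,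
    neg_one_sq, one_pow, one_mul]
  rcases eq_or_ne k 1 with rfl | hk1
  · linarith [hup' (by omega)]
  · linarith [hlow' hk1]

end AlternatingSums

section DecaysByFour

def DecaysByFour (r : ℕ → ℝ) (N : ℕ) : Prop :=
  (∀ i < N, 0 < r i) ∧ ∀ i, i + 1 < N → 4 * r (i + 1) ≤ r i

variable {r : ℕ → ℝ} {N : ℕ}

lemma DecaysByFour.four_mul_le (h : DecaysByFour r N) {i j : ℕ} (hij : i < j) (hj : j < N) :
    4 * r j ≤ r i := by
  induction j, hij using Nat.le_induction with
  | base => exact h.2 i hj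
  | succ j hij ih => linarith [ih (by omega), h.2 j hj, h.1 j (by omega)]

lemma DecaysByFour.le (h : DecaysByFour r N) {i j : ℕ} (hij : i ≤ j) (hj : j < N) :
    r j ≤ r i := by
  rcases hij.eq_or_lt with rfl | hij
  · exact le_rfl
  · linarith [h.four_mul_le hij hj, h.1 j hj]

-- At `testPoint r k` the ratios `r i * testPoint r k` are `≥ 2` for `i < k` and `≤ 1 / 2` for
-- `k ≤ i < N`.
noncomputable def testPoint (r : ℕ → ℝ) : ℕ → ℝ
  | 0 => (2 * r 0)⁻¹
  | k + 1 => 2 / r k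

lemma testPoint_pos (h : DecaysByFour r N) (hN : 0 < N) {k : ℕ} (hk : k ≤ N) :
    0 < testPoint r k := by
  rcases k with _ | k
  · have := h.1 0 hN
    simp only [testPoint]
    positivity
  · exact div_pos two_pos (h.1 k hk)

lemma testPoint_lt_succ (h : DecaysByFour r N) {k : ℕ} (hk : k < N) :
    testPoint r k < testPoint r (k + 1) := by
  rcases k with _ | k
  · have := h.1 0 hk
    simp only [testPoint]
    rw [inv_lt_iff_one_lt_mul₀ (by positivity)]
    field_simp
    norm_num
  · simp only [testPoint]
    exact div_lt_div_of_pos_left two_pos (h.1 (k + 1) hk) (by linarith [h.2 k hk, h.1 (k + 1) hk])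

lemma two_le_mul_testPoint (h : DecaysByFour r N) {i k : ℕ} (hik : i < k) (hk : k ≤ N) :
    2 ≤ r i * testPoint r k := by
  obtain ⟨k, rfl⟩ : ∃ k', k = k' + 1 := ⟨k - 1, by omega⟩
  rw [testPoint, mul_div_assoc', le_div_iff₀ (h.1 k (by omega))]
  linarith [h.le (show i ≤ k by omega) (by omega)]

lemma two_mul_mul_testPoint_le_one (h : DecaysByFour r N) {i k : ℕ} (hki : k ≤ i) (hi : i < N) :
    2 * (r i * testPoint r k) ≤ 1 := by
  rcases k with _ | k
  · have hr0 := h.1 0 (by omega)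
    rw [testPoint, ← div_eq_mul_inv, mul_div_assoc', div_le_one (by positivity)]
    linarith [h.le hki hi]
  · rw [testPoint, mul_div_assoc', mul_div_assoc', div_le_one (h.1 k (by omega))]
    linarith [h.four_mul_le (show k < i by omega) hi]

lemma decaysByFour_div {c : ℕ → ℝ} (hpos : ∀ i ≤ N, 0 < c i)
    (h4 : ∀ i, i + 2 ≤ N → 4 * (c (i + 2) * c i) ≤ c (i + 1) ^ 2) :
    DecaysByFour (fun i => c (i + 1) / c i) N := by
  refine ⟨fun i hi => div_pos (hpos _ hi) (hpos _ hi.le), fun i hi => ?_⟩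
  rw [← mul_div_assoc, div_le_div_iff₀ (hpos _ hi.le) (hpos i (by omega))]
  nlinarith [h4 i (by omega)]

end DecaysByFour

namespace Polynomial

lemma natDegree_sum_range_C_mul_X_pow {R : Type*} [Semiring R] (c : ℕ → R) {n : ℕ}
    (hn : c n ≠ 0) : (∑ i ∈ range (n + 1), C (c i) * X ^ i).natDegree = n := by
  refine natDegree_eq_of_le_of_coeff_ne_zero
    (natDegree_sum_le_of_forall_le _ _ fun i hi => ?_) ?_
  · exact (natDegree_C_mul_X_pow_le _ _).trans (by simpa [Nat.lt_succ_iff] using hi)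
  · simpa [finsetSum_coeff, coeff_C_mul_X_pow] using hn

lemma neg_one_pow_mul_eval_neg_sum_range (c : ℕ → ℝ) (n k : ℕ) (y : ℝ) :
    (-1) ^ k * (∑ i ∈ range (n + 1), C (c i) * X ^ i).eval (-y)
      = ∑ i ∈ range (n + 1), (-1) ^ (k + i) * (c i * y ^ i) := by
  simp only [eval_finsetSum, eval_mul, eval_C, eval_pow, eval_X, mul_sum]
  exact sum_congr rfl fun i _ => by rw [neg_pow, pow_add]; ring

lemma exists_isRoot_mem_Ioo_of_mul_neg {q : ℝ[X]} {a b : ℝ} (hab : a ≤ b)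
    (h : q.eval a * q.eval b < 0) : ∃ x ∈ Set.Ioo a b, q.IsRoot x := by
  rcases mul_neg_iff.1 h with ⟨ha, hb⟩ | ⟨ha, hb⟩
  · exact intermediate_value_Ioo' hab q.continuousOn ⟨hb, ha⟩
  · exact intermediate_value_Ioo hab q.continuousOn ⟨ha, hb⟩

theorem roots_nodup_of_sign_changes {q : ℝ[X]} {s : ℕ → ℝ}
    (hs : ∀ k < q.natDegree, s (k + 1) < s k)
    (hsign : ∀ k < q.natDegree, q.eval (s k) * q.eval (s (k + 1)) < 0) :
    Multiset.card q.roots = q.natDegree ∧ q.roots.Nodup ∧ ∀ x ∈ q.roots, x < s 0 := by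
  set n := q.natDegree
  have hanti : StrictAntiOn s (Set.Iic n) := strictAntiOn_Iic_of_succ_lt hs
  have hroot (k : Fin n) : ∃ x ∈ Set.Ioo (s (k + 1)) (s k), q.IsRoot x :=
    exists_isRoot_mem_Ioo_of_mul_neg (hs k k.2).le (by rw [mul_comm]; exact hsign k k.2)
  choose ρ hρ hρroot using hroot
  have hρ_lt (k : Fin n) : ρ k < s 0 :=
    (hρ k).2.trans_le (hanti.antitoneOn (by simp) (by simp [k.2.le]) k.1.zero_le)
  have hρ_anti : StrictAnti ρ := fun k l hkl =>
    calc ρ l < s l := (hρ l).2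
      _ ≤ s (k + 1) := hanti.antitoneOn (by simp [k.2]) (by simp [l.2.le]) hkl
      _ < ρ k := (hρ k).1
  have hnodup : (univ.val.map ρ).Nodup := univ.nodup.map hρ_anti.injective
  have hsub : univ.val.map ρ ≤ q.roots := by
    refine (Multiset.le_iff_subset hnodup).2 fun x hx => ?_
    obtain ⟨k, -, rfl⟩ := Multiset.mem_map.1 hx
    have hq : q ≠ 0 := fun h => by simpa [h] using hsign k k.2
    exact (mem_roots hq).2 (hρroot k)
  have hroots : univ.val.map ρ = q.roots :=
    Multiset.eq_of_le_of_card_le hsub (by simpa using q.card_roots')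
  rw [← hroots]
  refine ⟨by simp, hnodup, fun x hx => ?_⟩
  obtain ⟨k, -, rfl⟩ := Multiset.mem_map.1 hx
  exact hρ_lt k

lemma exists_root_eq_ofReal_of_card_roots {q : ℝ[X]} (hq : q ≠ 0)
    (hcard : Multiset.card q.roots = q.natDegree) {z : ℂ}
    (hz : (q.map (algebraMap ℝ ℂ)).IsRoot z) :
    ∃ x ∈ q.roots, (x : ℂ) = z ∧
      (q.map (algebraMap ℝ ℂ)).rootMultiplicity z = q.roots.count x := by
  have hinj := (algebraMap ℝ ℂ).injective
  have hroots : (q.map (algebraMap ℝ ℂ)).roots = q.roots.map (algebraMap ℝ ℂ) :=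
    (roots_map_of_injective_of_card_eq_natDegree hinj hcard).symm
  have hz' : z ∈ (q.map (algebraMap ℝ ℂ)).roots :=
    (mem_roots ((Polynomial.map_ne_zero_iff hinj).2 hq)).2 hz
  rw [hroots] at hz'
  obtain ⟨x, hx, rfl⟩ := Multiset.mem_map.1 hz'
  refine ⟨x, hx, rfl, ?_⟩
  rw [← count_roots, hroots, Multiset.count_map_eq_count' _ _ hinj]

end Polynomial

lemma mul_neg_of_neg_one_pow_mul_pos {a b : ℝ} {k : ℕ} (ha : 0 < (-1) ^ k * a)
    (hb : 0 < (-1) ^ (k + 1) * b) : a * b < 0 := by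
  rcases neg_one_pow_eq_or ℝ k with h | h <;> rw [pow_succ, h] at hb <;> rw [h] at ha <;>
    nlinarith

lemma neg_one_pow_mul_eval_neg_testPoint_pos {c : ℕ → ℝ} {N : ℕ} (hN : 3 ≤ N)
    (hpos : ∀ i ≤ N, 0 < c i)
    (h4 : ∀ i, i + 2 ≤ N → 4 * (c (i + 2) * c i) ≤ c (i + 1) ^ 2) {k : ℕ} (hk : k ≤ N) :
    0 < (-1) ^ k * (∑ i ∈ range (N + 1), C (c i) * X ^ i).eval
      (-testPoint (fun i => c (i + 1) / c i) k) := by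
  set r : ℕ → ℝ := fun i => c (i + 1) / c i
  have hdecay : DecaysByFour r N := decaysByFour_div hpos h4
  set y := testPoint r k
  have hy : 0 < y := testPoint_pos hdecay (by omega) hk
  have hterm_succ (i : ℕ) (hi : i < N) : c (i + 1) * y ^ (i + 1) = r i * y * (c i * y ^ i) := by
    have := (hpos i hi.le).ne'
    simp only [r]
    field_simp
    ring
  rw [neg_one_pow_mul_eval_neg_sum_range]
  refine alternating_sum_pos_of_halving_peak hN hk (fun i hi => mul_pos (hpos i hi) (pow_pos hy i))
    (fun i hik => ?_) (fun i hki hi => ?_)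
  · rw [hterm_succ i (by omega)]
    nlinarith [two_le_mul_testPoint hdecay hik hk, mul_pos (hpos i (by omega)) (pow_pos hy i)]
  · rw [hterm_succ i hi]
    nlinarith [two_mul_mul_testPoint_le_one hdecay hki hi, mul_pos (hpos i hi.le) (pow_pos hy i)]

theorem stmt_0 (N : ℕ) (hN : 3 ≤ N) (c : ℕ → ℝ)
    (hpos : ∀ i ≤ N, 0 < c i)
    (hβ : ∀ i, 1 ≤ i → i ≤ N - 1 → 4 * (c (i + 1) * c (i - 1)) ≤ (c i) ^ 2) :
    ∀ z : ℂ,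
      (∑ i ∈ Finset.range (N + 1), C ((c i : ℂ)) * X ^ i).IsRoot z →
      z.im = 0 ∧ z.re < 0 ∧
        (∑ i ∈ Finset.range (N + 1), C ((c i : ℂ)) * X ^ i).rootMultiplicity z = 1 := by
  have h4 (i : ℕ) (hi : i + 2 ≤ N) : 4 * (c (i + 2) * c i) ≤ c (i + 1) ^ 2 := by
    simpa using hβ (i + 1) (by omega) (by omega)
  set r : ℕ → ℝ := fun i => c (i + 1) / c i
  have hdecay : DecaysByFour r N := decaysByFour_div hpos h4
  set q : ℝ[X] := ∑ i ∈ range (N + 1), C (c i) * X ^ i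
  have hdeg : q.natDegree = N := natDegree_sum_range_C_mul_X_pow c (hpos N le_rfl).ne'
  have hq : q ≠ 0 := ne_zero_of_natDegree_gt (n := 0) (by omega)
  obtain ⟨hcard, hnodup, hneg⟩ :=
    roots_nodup_of_sign_changes (q := q) (s := fun k => -testPoint r k)
      (fun k hk => neg_lt_neg (testPoint_lt_succ hdecay (by omega)))
      (fun k hk => mul_neg_of_neg_one_pow_mul_pos
        (neg_one_pow_mul_eval_neg_testPoint_pos hN hpos h4 (by omega))
        (neg_one_pow_mul_eval_neg_testPoint_pos hN hpos h4 (by omega)))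
  have hmap : ∑ i ∈ range (N + 1), C (c i : ℂ) * X ^ i = q.map (algebraMap ℝ ℂ) := by
    simp [q, Polynomial.map_sum]
  intro z hz
  rw [hmap] at hz ⊢
  obtain ⟨x, hx, rfl, hmult⟩ := exists_root_eq_ofReal_of_card_roots hq hcard hz
  have hx_neg : x < 0 :=
    (hneg x hx).trans (neg_neg_of_pos (testPoint_pos hdecay (by omega) N.zero_le))
  exact ⟨by simp, by simpa using hx_neg, by rw [hmult, Multiset.count_eq_one_of_mem hnodup hx]⟩
end

section
/- Let (D_j)_{j≥k} be a sequence of positive reals with D_{k+1} ≤ D_k and D_j^2/(D_{j+1}D_{j-1}) ≥ β for all j > k, where β > 1. Then for all l ≥ k, D_l ≤ r^{l-k} β^{-(l-k)(l-k-1)/2} D_k where r = D_{k+1}/D_k, and consequently Σ_{j≥k} D_j ≤ F(r,β) D_k where F(r,β) = Σ_{m=0}^∞ r^m / β^{m(m-1)/2}. -/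
/-!
Log-concavity with ratio `β` says that the consecutive ratios `q j = D (j + 1) / D j` satisfy
`q (j + 1) ≤ q j / β`, so `q (k + i) ≤ r / β ^ i`. Multiplying the first `m` ratios gives
`D (k + m) ≤ r ^ m / β ^ (0 + 1 + ⋯ + (m - 1)) * D k`, and the majorant series converges for every
`r` because its ratios `r / β ^ m` tend to `0`.
-/

open Filter Topology

section LogConcave

variable {u : ℕ → ℝ} {β : ℝ}

theorem ratio_succ_le_ratio_div (hu : ∀ n, 0 < u n) (hβ : 0 < β)
    (hlc : ∀ n, β * (u (n + 2) * u n) ≤ u (n + 1) ^ 2) (n : ℕ) :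
    u (n + 2) / u (n + 1) ≤ u (n + 1) / u n / β := by
  rw [div_div, div_le_div_iff₀ (hu _) (mul_pos (hu n) hβ)]
  nlinarith [hlc n]

theorem ratio_le_ratio_zero_div_pow (hu : ∀ n, 0 < u n) (hβ : 0 < β)
    (hlc : ∀ n, β * (u (n + 2) * u n) ≤ u (n + 1) ^ 2) (n : ℕ) :
    u (n + 1) / u n ≤ u 1 / u 0 / β ^ n := by
  induction n with
  | zero => simp
  | succ n ih =>
    calc u (n + 2) / u (n + 1) ≤ u (n + 1) / u n / β := ratio_succ_le_ratio_div hu hβ hlc n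
      _ ≤ u 1 / u 0 / β ^ n / β := by gcongr
      _ = u 1 / u 0 / β ^ (n + 1) := by rw [pow_succ, div_div]

theorem le_ratio_pow_div_pow_choose_two_mul (hu : ∀ n, 0 < u n) (hβ : 0 < β)
    (hlc : ∀ n, β * (u (n + 2) * u n) ≤ u (n + 1) ^ 2) (n : ℕ) :
    u n ≤ (u 1 / u 0) ^ n / β ^ n.choose 2 * u 0 := by
  induction n with
  | zero => simp
  | succ n ih =>
    have hq : 0 ≤ u 1 / u 0 / β ^ n := by have := hu 0; have := hu 1; positivity
    calc u (n + 1) = u (n + 1) / u n * u n := (div_mul_cancel₀ _ (hu n).ne').symm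
      _ ≤ u 1 / u 0 / β ^ n * ((u 1 / u 0) ^ n / β ^ n.choose 2 * u 0) :=
          mul_le_mul (ratio_le_ratio_zero_div_pow hu hβ hlc n) ih (hu n).le hq
      _ = (u 1 / u 0) ^ (n + 1) / β ^ (n + 1).choose 2 * u 0 := by
          rw [Nat.choose_succ_succ, Nat.choose_one_right, pow_add, pow_succ]
          ring

theorem summable_pow_div_pow_choose_two (r : ℝ) (hβ : 1 < β) :
    Summable fun n : ℕ => r ^ n / β ^ n.choose 2 := by
  refine summable_of_ratio_norm_eventually_le (r := 1 / 2) (by norm_num) ?_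
  have hlarge : ∀ᶠ n : ℕ in atTop, 2 * |r| ≤ β ^ n :=
    (tendsto_pow_atTop_atTop_of_one_lt hβ).eventually_ge_atTop _
  filter_upwards [hlarge] with n hn
  have hβn : 0 < β ^ n := pow_pos (zero_lt_one.trans hβ) n
  have hsucc : r ^ (n + 1) / β ^ (n + 1).choose 2 = r / β ^ n * (r ^ n / β ^ n.choose 2) := by
    rw [Nat.choose_succ_succ, Nat.choose_one_right, pow_add, pow_succ]
    ring
  rw [hsucc, norm_mul, Real.norm_eq_abs, abs_div, abs_of_pos hβn]
  refine mul_le_mul_of_nonneg_right ?_ (norm_nonneg _)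
  rw [div_le_iff₀ hβn]
  linarith

theorem tsum_le_tsum_pow_div_pow_choose_two_mul (hu : ∀ n, 0 < u n) (hβ : 1 < β)
    (hlc : ∀ n, β * (u (n + 2) * u n) ≤ u (n + 1) ^ 2) :
    ∑' n, u n ≤ (∑' n : ℕ, (u 1 / u 0) ^ n / β ^ n.choose 2) * u 0 := by
  have hbound := le_ratio_pow_div_pow_choose_two_mul hu (zero_lt_one.trans hβ) hlc
  have hmajorant := (summable_pow_div_pow_choose_two (u 1 / u 0) hβ).mul_right (u 0)
  rw [← tsum_mul_right]
  exact (hmajorant.of_nonneg_of_le (fun n => (hu n).le) hbound).tsum_le_tsum hbound hmajorant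

end LogConcave

theorem stmt_2_general (k : ℕ) (D : ℕ → ℝ) (β : ℝ) (hβ : 1 < β)
    (hpos : ∀ j, k ≤ j → 0 < D j)
    (hratio : ∀ j, k < j → β * (D (j + 1) * D (j - 1)) ≤ (D j) ^ 2) :
    (∀ l, k ≤ l →
      D l ≤ (D (k + 1) / D k) ^ (l - k) / β ^ ((l - k) * (l - k - 1) / 2) * D k) ∧
    (∑' m : ℕ, D (k + m)) ≤
      (∑' m : ℕ, (D (k + 1) / D k) ^ m / β ^ (m * (m - 1) / 2)) * D k := by
  have hu : ∀ n, 0 < D (k + n) := fun n => hpos _ (Nat.le_add_right k n)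
  have hlc : ∀ n, β * (D (k + (n + 2)) * D (k + n)) ≤ D (k + (n + 1)) ^ 2 := fun n => by
    simpa [add_assoc] using hratio (k + (n + 1)) (by omega)
  simp only [← Nat.choose_two_right]
  refine ⟨fun l hl => ?_, by simpa using tsum_le_tsum_pow_div_pow_choose_two_mul hu hβ hlc⟩
  obtain ⟨m, rfl⟩ := Nat.exists_eq_add_of_le hl
  simpa using le_ratio_pow_div_pow_choose_two_mul hu (zero_lt_one.trans hβ) hlc m

theorem stmt_2 (k : ℕ) (D : ℕ → ℝ) (β : ℝ) (hβ : 1 < β)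
    (hpos : ∀ j, k ≤ j → 0 < D j) (hdec : D (k + 1) ≤ D k)
    (hratio : ∀ j, k < j → β * (D (j + 1) * D (j - 1)) ≤ (D j) ^ 2) :
    (∀ l, k ≤ l →
      D l ≤ (D (k + 1) / D k) ^ (l - k) / β ^ ((l - k) * (l - k - 1) / 2) * D k) ∧
    (∑' m : ℕ, D (k + m)) ≤
      (∑' m : ℕ, (D (k + 1) / D k) ^ m / β ^ (m * (m - 1) / 2)) * D k :=
  stmt_2_general k D β hβ hpos hratio
end

section
/- Let c_0,...,c_N be positive reals with c_j^2 ≥ 4 c_{j+1} c_{j-1} for 1 ≤ j ≤ N−1, and suppose x > 0 satisfies c_k x^k ≥ c_{k+1} x^{k+1} + c_{k-1} x^{k-1} for some 1 ≤ k ≤ N−1. Then sign(Σ_{j=0}^N c_j (−x)^j) = (−1)^k, provided N ≥ 3. -/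
/-!
Put `a j = c j * x ^ j`, so that `(-1) ^ k * f (-x) = ∑ j, (-1) ^ (j + k) * a j`. The sequence `a` is
positive and log-concave, and dominance at `k` gives `a (k - 1) < a k > a (k + 1)`; log-concavity
propagates these strict inequalities, so `a` increases strictly up to `k` and decreases strictly
after it. The sum is then `a k - a (k - 1) - a (k + 1) ≥ 0` plus the alternating sums of the runs
`a 0, …, a (k - 2)` and `a (k + 2), …, a N`. An alternating sum of a strictly monotone positive run
is positive and at most its largest term, which here carries the sign `+`; since `N ≥ 3`, at least
one of the two runs is nonempty.
-/

open Finset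

lemma lt_of_mul_le_sq_of_lt {p q r : ℝ} (hq : 0 < q) (h : p * r ≤ q ^ 2) (hqr : q < r) : p < q := by
  nlinarith

lemma lt_succ_below_of_logConcave {a : ℕ → ℝ} {N : ℕ} (hpos : ∀ j ≤ N, 0 < a j)
    (hlc : ∀ i, i + 2 ≤ N → a i * a (i + 2) ≤ a (i + 1) ^ 2) {k : ℕ} (hk : k + 1 ≤ N)
    (h : a k < a (k + 1)) : ∀ i ≤ k, a i < a (i + 1) := by
  induction k with
  | zero => intro i hi; rwa [Nat.le_zero.1 hi]
  | succ k ih =>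
    intro i hi
    rcases hi.lt_or_eq with hi | rfl
    · exact ih (by omega) (lt_of_mul_le_sq_of_lt (hpos _ (by omega)) (hlc k (by omega)) h) i
        (by omega)
    · exact h

lemma succ_lt_above_of_logConcave {a : ℕ → ℝ} {N : ℕ} (hpos : ∀ j ≤ N, 0 < a j)
    (hlc : ∀ i, i + 2 ≤ N → a i * a (i + 2) ≤ a (i + 1) ^ 2) {k : ℕ}
    (h : a (k + 1) < a k) : ∀ i, k ≤ i → i < N → a (i + 1) < a i := by
  intro i hki
  induction i, hki using Nat.le_induction with
  | base => exact fun _ ↦ h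
  | succ i _ ih =>
    intro hi
    exact lt_of_mul_le_sq_of_lt (hpos _ (by omega)) (by rw [mul_comm]; exact hlc i (by omega))
      (ih (by omega))

lemma alternating_sum_bounds_of_strictMono {a : ℕ → ℝ} {n : ℕ} (h0 : 0 < a 0)
    (hmono : ∀ i < n, a i < a (i + 1)) :
    0 < ∑ i ∈ range (n + 1), (-1) ^ (i + n) * a i ∧
      ∑ i ∈ range (n + 1), (-1) ^ (i + n) * a i ≤ a n := by
  induction n with
  | zero => simpa using h0
  | succ n ih =>
    obtain ⟨ih_pos, ih_le⟩ := ih fun i hi ↦ hmono i (by omega)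
    have hsum : ∑ i ∈ range (n + 1 + 1), (-1) ^ (i + (n + 1)) * a i
        = a (n + 1) - ∑ i ∈ range (n + 1), (-1) ^ (i + n) * a i := by
      rw [sum_range_succ, Even.neg_one_pow ⟨n + 1, rfl⟩]
      simp only [← add_assoc, pow_succ, mul_neg_one, neg_mul, sum_neg_distrib]
      ring
    have := hmono n (by omega)
    constructor <;> linarith

lemma alternating_sum_bounds_of_strictAnti {b : ℕ → ℝ} {n : ℕ} (hn : 0 < b n)
    (hanti : ∀ i < n, b (i + 1) < b i) :
    0 < ∑ i ∈ range (n + 1), (-1) ^ i * b i ∧ ∑ i ∈ range (n + 1), (-1) ^ i * b i ≤ b 0 := by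
  induction n generalizing b with
  | zero => simpa using hn
  | succ n ih =>
    obtain ⟨ih_pos, ih_le⟩ := ih (b := fun i ↦ b (i + 1)) hn fun i hi ↦ hanti (i + 1) (by omega)
    have hsum : ∑ i ∈ range (n + 1 + 1), (-1) ^ i * b i
        = b 0 - ∑ i ∈ range (n + 1), (-1) ^ i * b (i + 1) := by
      rw [sum_range_succ']
      simp only [pow_succ, mul_neg_one, neg_mul, sum_neg_distrib]
      ring
    have := hanti 0 (by omega)
    constructor <;> linarith

theorem alternating_sum_pos_of_dominant {a : ℕ → ℝ} {N k : ℕ} (hN : 3 ≤ N)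
    (hpos : ∀ j ≤ N, 0 < a j) (hlc : ∀ i, i + 2 ≤ N → a i * a (i + 2) ≤ a (i + 1) ^ 2)
    (hk : k + 2 ≤ N) (hdom : a k + a (k + 2) ≤ a (k + 1)) :
    0 < ∑ j ∈ range (N + 1), (-1) ^ (j + k + 1) * a j := by
  set f : ℕ → ℝ := fun j ↦ (-1) ^ (j + k + 1) * a j
  have hsq : (-1 : ℝ) ^ (2 * k) = 1 := Even.neg_one_pow ⟨k, two_mul k⟩
  have hinc := lt_succ_below_of_logConcave hpos hlc (k := k) (by omega)
    (by linarith [hpos (k + 2) hk])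
  have hdec := succ_lt_above_of_logConcave hpos hlc (k := k + 1)
    (by linarith [hpos k (by omega)])
  have hsplit : ∑ j ∈ range (N + 1), f j
      = ∑ j ∈ range k, f j + (a (k + 1) - a k - a (k + 2)) + ∑ j ∈ Ico (k + 3) (N + 1), f j := by
    rw [← sum_range_add_sum_Ico f (show k + 3 ≤ N + 1 by omega)]
    simp only [sum_range_succ, f]
    linear_combination (a (k + 1) - a k - a (k + 2)) * hsq
  have hlower : 0 < k → 0 < ∑ j ∈ range k, f j := by
    intro hk0
    obtain ⟨n, rfl⟩ : ∃ n, k = n + 1 := ⟨k - 1, by omega⟩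
    convert (alternating_sum_bounds_of_strictMono (n := n) (hpos 0 (by omega))
      fun i hi ↦ hinc i (by omega)).1 using 2 with j
    simp only [f]
    ring
  have hupper : k + 3 ≤ N → 0 < ∑ j ∈ Ico (k + 3) (N + 1), f j := by
    intro hkN
    obtain ⟨n, rfl⟩ : ∃ n, N = k + 3 + n := ⟨N - (k + 3), by omega⟩
    rw [sum_Ico_eq_sum_range, show k + 3 + n + 1 - (k + 3) = n + 1 by omega]
    convert (alternating_sum_bounds_of_strictAnti (b := fun i ↦ a (k + 3 + i)) (n := n)
      (hpos _ le_rfl) fun i hi ↦ hdec (k + 3 + i) (by omega) (by omega)).1 using 2 with j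
    simp only [f]
    linear_combination (-1) ^ j * a (k + 3 + j) * hsq
  rw [hsplit]
  rcases Nat.eq_zero_or_pos k with rfl | hk0
  · simp only [range_zero, sum_empty]
    linarith [hupper (by omega)]
  · rcases le_or_gt (k + 3) N with hkN | hkN
    · linarith [hlower hk0, hupper hkN]
    · rw [Ico_eq_empty (by omega), sum_empty]
      linarith [hlower hk0]

theorem stmt_3 (N : ℕ) (hN : 3 ≤ N) (c : ℕ → ℝ) (hpos : ∀ j ≤ N, 0 < c j)
    (hβ : ∀ j, 1 ≤ j → j ≤ N - 1 → 4 * (c (j + 1) * c (j - 1)) ≤ (c j) ^ 2)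
    (x : ℝ) (hx : 0 < x) (k : ℕ) (hk1 : 1 ≤ k) (hk2 : k ≤ N - 1)
    (hmode : c (k + 1) * x ^ (k + 1) + c (k - 1) * x ^ (k - 1) ≤ c k * x ^ k) :
    0 < (-1 : ℝ) ^ k * ∑ j ∈ Finset.range (N + 1), c j * (-x) ^ j := by
  obtain ⟨k, rfl⟩ : ∃ k', k = k' + 1 := ⟨k - 1, by omega⟩
  have hlc : ∀ i, i + 2 ≤ N →
      c i * x ^ i * (c (i + 2) * x ^ (i + 2)) ≤ (c (i + 1) * x ^ (i + 1)) ^ 2 := by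
    intro i hi
    have h4 := hβ (i + 1) (by omega) (by omega)
    rw [Nat.add_sub_cancel] at h4
    have hprod := mul_pos (hpos (i + 2) hi) (hpos i (by omega))
    calc c i * x ^ i * (c (i + 2) * x ^ (i + 2)) = c (i + 2) * c i * (x ^ (i + 1)) ^ 2 := by ring
      _ ≤ c (i + 1) ^ 2 * (x ^ (i + 1)) ^ 2 := by gcongr; linarith
      _ = (c (i + 1) * x ^ (i + 1)) ^ 2 := by ring
  have hsum : (-1 : ℝ) ^ (k + 1) * ∑ j ∈ range (N + 1), c j * (-x) ^ j
      = ∑ j ∈ range (N + 1), (-1) ^ (j + k + 1) * (c j * x ^ j) := by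
    rw [mul_sum]
    refine sum_congr rfl fun j _ ↦ ?_
    rw [neg_pow]
    ring
  rw [hsum]
  exact alternating_sum_pos_of_dominant hN (fun j hj ↦ mul_pos (hpos j hj) (pow_pos hx j)) hlc
    (by omega) (by rw [Nat.add_sub_cancel] at hmode; linarith)
end

section
/- For every ε > 0 and every N ≥ 5, there exists a real polynomial p of degree N with all coefficients positive such that c_j^2/(c_{j+1}c_{j-1}) > 1 + √2 − ε for all 1 ≤ j ≤ N−1, yet p has a root z with |arg z| = 3π/4. -/
/-!
With `a = 1 + √2`, the cubic `z³ + a z² + a z + 1 = (z + 1)(z² + √2 z + 1)` vanishes at `e^{3πi/4}`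
and both of its ratios `c_j² / (c_{j+1} c_{j-1})` equal `a`. Multiply it by
`Q = ∑_{k ≤ N - 3} t^{k²} z^k`, whose coefficients satisfy `q_{k+1} q_{k-1} ≤ t q_k²`. For small `t`
the first two ratios of the product move only slightly away from `a`, while from index `3` on the
coefficients of the product are within a factor `2a + 2` of the shifted `q_k`, so the remaining
ratios are at least `1 / ((2a + 2)² t)`.
-/

open Polynomial Finset Filter Topology Real

namespace Polynomial

theorem coeff_mul_eq_sum_range {R : Type*} [Semiring R] (p q : R[X]) (n : ℕ) :
    (p * q).coeff n = ∑ i ∈ range (n + 1), p.coeff i * q.coeff (n - i) := by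
  rw [coeff_mul, Nat.sum_antidiagonal_eq_sum_range_succ (fun i k => p.coeff i * q.coeff k)]

variable {R : Type*} [Semiring R] [PartialOrder R] [IsOrderedRing R] {p q : R[X]}

theorem sum_range_coeff_le_eval_one (hp : ∀ i, 0 ≤ p.coeff i) (n : ℕ) :
    ∑ i ∈ range n, p.coeff i ≤ p.eval 1 := by
  have hdeg : p.natDegree < max n (p.natDegree + 1) := lt_max_of_lt_right (Nat.lt_succ_self _)
  simp only [eval_eq_sum_range' hdeg, one_pow, mul_one]
  exact sum_le_sum_of_subset_of_nonneg (range_subset_range.mpr (le_max_left _ _))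
    fun i _ _ => hp i

theorem coeff_mul_coeff_le_coeff_mul (hp : ∀ i, 0 ≤ p.coeff i) (hq : ∀ k, 0 ≤ q.coeff k)
    (i k : ℕ) : p.coeff i * q.coeff k ≤ (p * q).coeff (i + k) := by
  rw [coeff_mul]
  exact single_le_sum (f := fun x : ℕ × ℕ => p.coeff x.1 * q.coeff x.2)
    (fun x _ => mul_nonneg (hp _) (hq _)) (a := (i, k)) (mem_antidiagonal.mpr rfl)

theorem coeff_mul_le_eval_one_mul_coeff_sub (hp : ∀ i, 0 ≤ p.coeff i) (hq : ∀ k, 0 ≤ q.coeff k)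
    (hq' : Antitone q.coeff) {d : ℕ} (hd : p.natDegree ≤ d) (n : ℕ) :
    (p * q).coeff n ≤ p.eval 1 * q.coeff (n - d) := by
  rw [coeff_mul_eq_sum_range]
  calc ∑ i ∈ range (n + 1), p.coeff i * q.coeff (n - i)
      ≤ ∑ i ∈ range (n + 1), p.coeff i * q.coeff (n - d) := by
        refine sum_le_sum fun i _ => ?_
        rcases le_or_gt i d with hi | hi
        · exact mul_le_mul_of_nonneg_left (hq' (by omega)) (hp i)
        · simp [coeff_eq_zero_of_natDegree_lt (hd.trans_lt hi)]
    _ = (∑ i ∈ range (n + 1), p.coeff i) * q.coeff (n - d) := (sum_mul ..).symm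
    _ ≤ p.eval 1 * q.coeff (n - d) :=
        mul_le_mul_of_nonneg_right (sum_range_coeff_le_eval_one hp _) (hq _)

theorem coeff_mul_le_coeff_mul_coeff_zero_add (hp : ∀ i, 0 ≤ p.coeff i) (hq : ∀ k, 0 ≤ q.coeff k)
    (hq' : Antitone q.coeff) (n : ℕ) :
    (p * q).coeff n ≤ p.coeff n * q.coeff 0 + p.eval 1 * q.coeff 1 := by
  rw [coeff_mul_eq_sum_range, sum_range_succ, Nat.sub_self, add_comm]
  gcongr
  calc ∑ i ∈ range n, p.coeff i * q.coeff (n - i)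
      ≤ ∑ i ∈ range n, p.coeff i * q.coeff 1 := by
        refine sum_le_sum fun i hi => mul_le_mul_of_nonneg_left (hq' ?_) (hp i)
        have := mem_range.mp hi
        omega
    _ = (∑ i ∈ range n, p.coeff i) * q.coeff 1 := (sum_mul ..).symm
    _ ≤ p.eval 1 * q.coeff 1 :=
        mul_le_mul_of_nonneg_right (sum_range_coeff_le_eval_one hp _) (hq _)

end Polynomial

noncomputable def symmCubic (a : ℝ) : ℝ[X] := X ^ 3 + C a * X ^ 2 + C a * X + 1

noncomputable def truncGauss (t : ℝ) (M : ℕ) : ℝ[X] := ∑ k ∈ range (M + 1), C (t ^ k ^ 2) * X ^ k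

section symmCubic

variable (a : ℝ)

theorem natDegree_symmCubic_le : (symmCubic a).natDegree ≤ 3 := by
  unfold symmCubic; compute_degree

@[simp] theorem coeff_symmCubic_zero : (symmCubic a).coeff 0 = 1 := by simp [symmCubic]
@[simp] theorem coeff_symmCubic_one : (symmCubic a).coeff 1 = a := by simp [symmCubic, coeff_one]
@[simp] theorem coeff_symmCubic_two : (symmCubic a).coeff 2 = a := by simp [symmCubic, coeff_one]
@[simp] theorem coeff_symmCubic_three : (symmCubic a).coeff 3 = 1 := by simp [symmCubic, coeff_one]

theorem eval_one_symmCubic : (symmCubic a).eval 1 = 2 * a + 2 := by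
  simp [symmCubic]; ring

variable {a}

theorem coeff_symmCubic_pos (ha : 0 < a) {i : ℕ} (hi : i ≤ 3) : 0 < (symmCubic a).coeff i := by
  interval_cases i <;> simp [ha]

theorem coeff_symmCubic_nonneg (ha : 0 < a) (i : ℕ) : 0 ≤ (symmCubic a).coeff i := by
  rcases le_or_gt i 3 with hi | hi
  · exact (coeff_symmCubic_pos ha hi).le
  · rw [coeff_eq_zero_of_natDegree_lt ((natDegree_symmCubic_le a).trans_lt hi)]

end symmCubic

section truncGauss

variable {t : ℝ} {M : ℕ}

theorem coeff_truncGauss (k : ℕ) :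
    (truncGauss t M).coeff k = if k ≤ M then t ^ k ^ 2 else 0 := by
  simp only [truncGauss, finsetSum_coeff, coeff_C_mul_X_pow, sum_ite_eq, mem_range,
    Nat.lt_succ_iff]

theorem natDegree_truncGauss_le : (truncGauss t M).natDegree ≤ M :=
  natDegree_sum_le_of_forall_le _ _ fun k hk =>
    (natDegree_C_mul_X_pow_le _ k).trans (Nat.lt_succ_iff.mp (mem_range.mp hk))

@[simp] theorem coeff_truncGauss_zero : (truncGauss t M).coeff 0 = 1 := by
  simp [coeff_truncGauss]

variable (ht : 0 < t) (ht₁ : t ≤ 1)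
include ht

theorem coeff_truncGauss_pos {k : ℕ} (hk : k ≤ M) : 0 < (truncGauss t M).coeff k := by
  rw [coeff_truncGauss, if_pos hk]; positivity

theorem coeff_truncGauss_nonneg (k : ℕ) : 0 ≤ (truncGauss t M).coeff k := by
  rw [coeff_truncGauss]; split_ifs <;> positivity

theorem coeff_truncGauss_one_le : (truncGauss t M).coeff 1 ≤ t := by
  rw [coeff_truncGauss]; split_ifs <;> simp [ht.le]

include ht₁

theorem antitone_coeff_truncGauss : Antitone (truncGauss t M).coeff := by
  intro k l hkl
  simp only [coeff_truncGauss]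
  split_ifs with hl hk hk
  · exact pow_le_pow_of_le_one ht.le ht₁ (Nat.pow_le_pow_left hkl 2)
  · omega
  · positivity
  · rfl

/-- `k - 1` is truncated, so at `k = 0` this reads `q₁ q₀ ≤ t q₀²`, which holds with equality. -/
theorem coeff_truncGauss_succ_mul_pred_le (k : ℕ) :
    (truncGauss t M).coeff (k + 1) * (truncGauss t M).coeff (k - 1)
      ≤ t * (truncGauss t M).coeff k ^ 2 := by
  by_cases hk : k + 1 ≤ M
  · simp only [coeff_truncGauss, if_pos hk, if_pos (by omega : k ≤ M),
      if_pos (by omega : k - 1 ≤ M)]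
    rcases k with _ | k
    · simp
    · calc t ^ (k + 2) ^ 2 * t ^ k ^ 2 = t * t * (t ^ (k + 1) ^ 2) ^ 2 := by ring
        _ ≤ t * (t ^ (k + 1) ^ 2) ^ 2 := by gcongr; exact mul_le_of_le_one_right ht.le ht₁
  · rw [coeff_truncGauss, if_neg hk, zero_mul]
    exact mul_nonneg ht.le (sq_nonneg _)

end truncGauss

theorem symmCubic_one_add_sqrt_two :
    symmCubic (1 + √2) = (X + 1) * (X ^ 2 + C √2 * X + 1) := by
  simp only [symmCubic, C_add, C_1]; ring

theorem aeval_cos_add_sin_three_pi_div_four_symmCubic :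
    aeval (Complex.cos ↑(3 * π / 4) + Complex.sin ↑(3 * π / 4) * Complex.I)
      (symmCubic (1 + √2)) = 0 := by
  set z := Complex.cos ↑(3 * π / 4) + Complex.sin ↑(3 * π / 4) * Complex.I with hz_def
  have hθ : 3 * π / 4 = π - π / 4 := by ring
  have hz : z = -(√2 / 2 : ℂ) + (√2 / 2 : ℂ) * Complex.I := by
    rw [hz_def, ← Complex.ofReal_cos, ← Complex.ofReal_sin, hθ, Real.cos_pi_sub, Real.sin_pi_sub,
      Real.cos_pi_div_four, Real.sin_pi_div_four]
    push_cast; ring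
  have hsqrt : ((√2 : ℝ) : ℂ) ^ 2 = 2 := by
    rw [← Complex.ofReal_pow, Real.sq_sqrt zero_le_two]; norm_num
  have hquad : z ^ 2 + √2 * z + 1 = 0 := by
    rw [hz]
    linear_combination (Complex.I ^ 2 - 1) / 4 * hsqrt + 1 / 2 * Complex.I_sq
  rw [symmCubic_one_add_sqrt_two]
  simp only [map_mul, map_add, aeval_X, map_pow, aeval_C, map_one, Complex.coe_algebraMap]
  linear_combination (z + 1) * hquad

theorem arg_cos_add_sin_three_pi_div_four :
    (Complex.cos ↑(3 * π / 4) + Complex.sin ↑(3 * π / 4) * Complex.I).arg = 3 * π / 4 := by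
  have := Real.pi_pos
  exact Complex.arg_cos_add_sin_mul_I ⟨by linarith, by linarith⟩

section product

variable {a t : ℝ} {M : ℕ} (ha : 0 < a) (ht : 0 < t) (ht₁ : t ≤ 1)
include ha ht

theorem coeff_symmCubic_mul_truncGauss_pos {j : ℕ} (hj : j ≤ M + 3) :
    0 < (symmCubic a * truncGauss t M).coeff j := by
  calc 0 < (symmCubic a).coeff (min j 3) * (truncGauss t M).coeff (j - min j 3) :=
        mul_pos (coeff_symmCubic_pos ha (min_le_right _ _)) (coeff_truncGauss_pos ht (by omega))
    _ ≤ (symmCubic a * truncGauss t M).coeff (min j 3 + (j - min j 3)) :=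
        coeff_mul_coeff_le_coeff_mul (coeff_symmCubic_nonneg ha) (coeff_truncGauss_nonneg ht) _ _
    _ = (symmCubic a * truncGauss t M).coeff j := by rw [Nat.add_sub_cancel' (min_le_left _ _)]

include ht₁

theorem div_le_sq_coeff_div_symmCubic_mul_truncGauss {j : ℕ} (hj : j = 1 ∨ j = 2) :
    a ^ 2 / ((a + (2 * a + 2) * t) * (1 + (2 * a + 2) * t)) ≤
      (symmCubic a * truncGauss t M).coeff j ^ 2 /
        ((symmCubic a * truncGauss t M).coeff (j + 1) *
          (symmCubic a * truncGauss t M).coeff (j - 1)) := by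
  set c := (symmCubic a * truncGauss t M).coeff
  have hB := coeff_symmCubic_nonneg ha
  have hQ := coeff_truncGauss_nonneg (M := M) ht
  have hc_le (i : ℕ) : c i ≤ (symmCubic a).coeff i + (2 * a + 2) * t := by
    calc c i ≤ (symmCubic a).coeff i * (truncGauss t M).coeff 0
          + (symmCubic a).eval 1 * (truncGauss t M).coeff 1 :=
          coeff_mul_le_coeff_mul_coeff_zero_add hB hQ (antitone_coeff_truncGauss ht ht₁) i
      _ ≤ (symmCubic a).coeff i + (2 * a + 2) * t := by
          rw [coeff_truncGauss_zero, mul_one, eval_one_symmCubic]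
          gcongr
          exact coeff_truncGauss_one_le ht
  have hc_ge : a ≤ c j := by
    have := coeff_mul_coeff_le_coeff_mul hB hQ j 0
    rcases hj with rfl | rfl <;> simpa using this
  have hc_pos (i : ℕ) (hi : i ≤ 3) : 0 < c i :=
    coeff_symmCubic_mul_truncGauss_pos ha ht (by omega)
  refine div_le_div₀ (sq_nonneg _) (pow_le_pow_left₀ ha.le hc_ge 2)
    (mul_pos (hc_pos _ (by omega)) (hc_pos _ (by omega))) ?_
  rcases hj with rfl | rfl
  · simpa using mul_le_mul (hc_le 2) (hc_le 0) (hc_pos 0 (by omega)).le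
      ((hc_pos 2 (by omega)).le.trans (hc_le 2))
  · simpa [mul_comm] using mul_le_mul (hc_le 3) (hc_le 1) (hc_pos 1 (by omega)).le
      ((hc_pos 3 le_rfl).le.trans (hc_le 3))

theorem one_div_le_sq_coeff_div_symmCubic_mul_truncGauss {j : ℕ} (hj₃ : 3 ≤ j)
    (hjM : j ≤ M + 2) :
    1 / ((2 * a + 2) ^ 2 * t) ≤
      (symmCubic a * truncGauss t M).coeff j ^ 2 /
        ((symmCubic a * truncGauss t M).coeff (j + 1) *
          (symmCubic a * truncGauss t M).coeff (j - 1)) := by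
  obtain ⟨k, rfl⟩ : ∃ k, j = k + 3 := ⟨j - 3, by omega⟩
  set c := (symmCubic a * truncGauss t M).coeff
  set q := (truncGauss t M).coeff
  have hB := coeff_symmCubic_nonneg ha
  have hQ := coeff_truncGauss_nonneg (M := M) ht
  have hc_le (i : ℕ) : c i ≤ (2 * a + 2) * q (i - 3) := by
    simpa [eval_one_symmCubic] using coeff_mul_le_eval_one_mul_coeff_sub hB hQ
      (antitone_coeff_truncGauss ht ht₁) (natDegree_symmCubic_le a) i
  have hq_le : q k ≤ c (k + 3) := by
    simpa [add_comm k] using coeff_mul_coeff_le_coeff_mul hB hQ 3 k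
  have hq_pos : 0 < q k := coeff_truncGauss_pos ht (by omega)
  have hc_pos : 0 < c (k + 3 + 1) * c (k + 3 - 1) :=
    mul_pos (coeff_symmCubic_mul_truncGauss_pos ha ht (by omega))
      (coeff_symmCubic_mul_truncGauss_pos ha ht (by omega))
  have key : c (k + 3 + 1) * c (k + 3 - 1) ≤ (2 * a + 2) ^ 2 * t * c (k + 3) ^ 2 :=
    calc c (k + 3 + 1) * c (k + 3 - 1)
        ≤ ((2 * a + 2) * q (k + 1)) * ((2 * a + 2) * q (k - 1)) := by
          have h₁ := hc_le (k + 3 + 1)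
          have h₂ := hc_le (k + 3 - 1)
          rw [show k + 3 + 1 - 3 = k + 1 by omega] at h₁
          rw [show k + 3 - 1 - 3 = k - 1 by omega] at h₂
          exact mul_le_mul h₁ h₂ (coeff_symmCubic_mul_truncGauss_pos ha ht (by omega)).le
            (mul_nonneg (by linarith) (hQ _))
      _ = (2 * a + 2) ^ 2 * (q (k + 1) * q (k - 1)) := by ring
      _ ≤ (2 * a + 2) ^ 2 * (t * q k ^ 2) :=
          mul_le_mul_of_nonneg_left (coeff_truncGauss_succ_mul_pred_le ht ht₁ k) (sq_nonneg _)
      _ ≤ (2 * a + 2) ^ 2 * t * c (k + 3) ^ 2 := by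
          rw [← mul_assoc]; gcongr
  calc 1 / ((2 * a + 2) ^ 2 * t)
      = c (k + 3) ^ 2 / ((2 * a + 2) ^ 2 * t * c (k + 3) ^ 2) := by
        have : c (k + 3) ≠ 0 := (hq_pos.trans_le hq_le).ne'
        field_simp
    _ ≤ c (k + 3) ^ 2 / (c (k + 3 + 1) * c (k + 3 - 1)) :=
        div_le_div_of_nonneg_left (sq_nonneg _) hc_pos key

end product

theorem exists_pos_le_one_lt_div (a L K : ℝ) (ha : 0 < a) (hL : L < a) (hK : 0 < K) :
    ∃ t : ℝ, 0 < t ∧ t ≤ 1 ∧ L < a ^ 2 / ((a + K * t) * (1 + K * t)) ∧ L < 1 / (K ^ 2 * t) := by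
  have h_cont : Tendsto (fun t : ℝ => a ^ 2 / ((a + K * t) * (1 + K * t))) (𝓝[>] 0) (𝓝 a) := by
    have : ContinuousAt (fun t : ℝ => a ^ 2 / ((a + K * t) * (1 + K * t))) 0 :=
      ContinuousAt.div (by fun_prop) (by fun_prop) (by simp [ha.ne'])
    simpa [sq, ha.ne'] using this.tendsto.mono_left nhdsWithin_le_nhds
  have h_inv : Tendsto (fun t : ℝ => 1 / (K ^ 2 * t)) (𝓝[>] 0) atTop := by
    simpa [mul_comm] using tendsto_inv_nhdsGT_zero.const_mul_atTop (inv_pos.mpr (pow_pos hK 2))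
  obtain ⟨t, ⟨ht₀, ht₁⟩, h₁, h₂⟩ := (Eventually.and (Ioo_mem_nhdsGT one_pos)
    ((h_cont.eventually_const_lt hL).and (h_inv.eventually_gt_atTop L))).exists
  exact ⟨t, ht₀, ht₁.le, h₁, h₂⟩

theorem sum_range_coeff_mul_pow_eq_aeval {p : ℝ[X]} {n : ℕ} (hp : p.natDegree ≤ n) (z : ℂ) :
    ∑ j ∈ range (n + 1), (p.coeff j : ℂ) * z ^ j = aeval z p := by
  simp only [aeval_eq_sum_range' (Nat.lt_succ_of_le hp), Complex.real_smul]

theorem stmt_10 (ε : ℝ) (hε : 0 < ε) (N : ℕ) (hN : 5 ≤ N) :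
    ∃ c : ℕ → ℝ, (∀ j ≤ N, 0 < c j) ∧
      (∀ j, 1 ≤ j → j ≤ N - 1 →
        1 + Real.sqrt 2 - ε < (c j) ^ 2 / (c (j + 1) * c (j - 1))) ∧
      ∃ z : ℂ, (∑ j ∈ Finset.range (N + 1), (c j : ℂ) * z ^ j) = 0 ∧
        |z.arg| = 3 * Real.pi / 4 := by
  set a := 1 + √2
  have ha : 0 < a := by positivity
  obtain ⟨t, ht, ht₁, h_small, h_large⟩ :=
    exists_pos_le_one_lt_div a (a - ε) (2 * a + 2) ha (by linarith) (by linarith)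
  obtain ⟨M, rfl⟩ : ∃ M, N = M + 3 := ⟨N - 3, by omega⟩
  have hdeg : (symmCubic a * truncGauss t M).natDegree ≤ M + 3 :=
    natDegree_mul_le.trans <|
      (add_le_add (natDegree_symmCubic_le a) natDegree_truncGauss_le).trans_eq (add_comm 3 M)
  refine ⟨(symmCubic a * truncGauss t M).coeff,
    fun j hj => coeff_symmCubic_mul_truncGauss_pos ha ht hj, fun j hj₁ hj₂ => ?_, _, ?_,
    by rw [arg_cos_add_sin_three_pi_div_four, abs_of_pos (by positivity)]⟩
  · rcases le_or_gt j 2 with hj | hj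
    · exact h_small.trans_le (div_le_sq_coeff_div_symmCubic_mul_truncGauss ha ht ht₁ (by omega))
    · exact h_large.trans_le
        (one_div_le_sq_coeff_div_symmCubic_mul_truncGauss ha ht ht₁ (by omega) (by omega))
  · rw [sum_range_coeff_mul_pow_eq_aeval hdeg, map_mul,
      aeval_cos_add_sin_three_pi_div_four_symmCubic, zero_mul]
end

section
/- Fix r, s with 0 ≤ s ≤ r ≤ 1 and rs ≤ 1/β for some β > 0, and fix ψ ∈ (0, π/4]. If β ≥ max{4cos²ψ, 1 + 2cos ψ}, then r sin ψ + s sin 3ψ ≤ sin 2ψ. -/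
/-!
Since `sin 3ψ = sin ψ (4 cos² ψ - 1)` and `sin 2ψ = 2 sin ψ cos ψ`, the claim is
`r + (4 cos² ψ - 1) s ≤ 2 cos ψ`. For `a ≥ 0`, the function `r + a s` on
`{0 ≤ s ≤ r ≤ 1, r s ≤ 1/β}` is maximal at one of the points `(1, 1/β)` and
`(β^{-1/2}, β^{-1/2})`: below `s = 1/β` take `r = 1`, above it `r = 1/(β s)` and
`s ↦ 1/(β s) + a s` is convex. At these points the bound reduces to `1 + 2 cos ψ ≤ β` and
`4 cos² ψ ≤ β` respectively.
-/

open Real Set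

theorem add_mul_le_of_vertex_bounds {a β M r s : ℝ} (ha : 0 ≤ a) (hβ : 0 < β) (hs : 0 ≤ s)
    (hsr : s ≤ r) (hr : r ≤ 1) (hrs : r * s ≤ 1 / β) (h₁ : 1 + a / β ≤ M)
    (h₂ : (1 + a) / √β ≤ M) : r + a * s ≤ M := by
  rcases le_or_gt s (1 / β) with hsβ | hsβ
  · have := mul_le_mul_of_nonneg_left hsβ ha
    rw [mul_one_div] at this
    linarith
  have hs₀ : 0 < s := lt_trans (by positivity) hsβ
  have hsq : s ≤ 1 / √β := by
    rw [le_div_iff₀ (sqrt_pos.2 hβ), ← sqrt_sq hs, ← sqrt_mul (sq_nonneg s), sqrt_le_one]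
    rw [le_div_iff₀ hβ] at hrs
    nlinarith
  have hr' : r ≤ β⁻¹ * s ^ (-1 : ℤ) := by
    simpa [zpow_neg_one, div_eq_mul_inv] using (le_div_iff₀ hs₀).2 hrs
  have hconv : ConvexOn ℝ (Ioi 0) (fun t : ℝ => β⁻¹ * t ^ (-1 : ℤ) + a * t) :=
    ((convexOn_zpow (-1)).smul (inv_nonneg.2 hβ.le)).add ((convexOn_id (convex_Ioi 0)).smul ha)
  have hmax := hconv.le_max_of_mem_Icc (x := 1 / β) (y := 1 / √β) (by simpa using hβ)
    (by simpa using hβ) ⟨hsβ.le, hsq⟩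
  have hv₁ : β⁻¹ * (1 / β) ^ (-1 : ℤ) + a * (1 / β) = 1 + a / β := by
    field_simp
  have hv₂ : β⁻¹ * (1 / √β) ^ (-1 : ℤ) + a * (1 / √β) = (1 + a) / √β := by
    field_simp
    rw [sq_sqrt hβ.le]
    ring
  simp only [hv₁, hv₂] at hmax
  calc r + a * s ≤ β⁻¹ * s ^ (-1 : ℤ) + a * s := by linarith
    _ ≤ M := hmax.trans (max_le h₁ h₂)

theorem stmt_13 (r s β ψ : ℝ) (hs : 0 ≤ s) (hsr : s ≤ r) (hr : r ≤ 1)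
    (hβ : 0 < β) (hrs : r * s ≤ 1 / β)
    (hψ1 : 0 < ψ) (hψ2 : ψ ≤ Real.pi / 4)
    (hβ2 : max (4 * Real.cos ψ ^ 2) (1 + 2 * Real.cos ψ) ≤ β) :
    r * Real.sin ψ + s * Real.sin (3 * ψ) ≤ Real.sin (2 * ψ) := by
  set c := cos ψ
  obtain ⟨hβc₁, hβc₂⟩ := max_le_iff.1 hβ2
  have hsin : 0 < sin ψ := sin_pos_of_pos_of_lt_pi hψ1 (by linarith [pi_pos])
  have hc : 1 / 2 < c := by
    rw [← cos_pi_div_three]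
    exact cos_lt_cos_of_nonneg_of_le_pi hψ1.le (by linarith [pi_pos]) (by linarith [pi_pos])
  have hsin3 : sin (3 * ψ) = sin ψ * (4 * c ^ 2 - 1) := by
    rw [sin_three_mul]
    linear_combination (-4 * sin ψ) * sin_sq_add_cos_sq ψ
  have h₁ : 1 + (4 * c ^ 2 - 1) / β ≤ 2 * c := by
    have : (4 * c ^ 2 - 1) / β ≤ 2 * c - 1 := by
      rw [div_le_iff₀ hβ]
      nlinarith
    linarith
  have h₂ : (1 + (4 * c ^ 2 - 1)) / √β ≤ 2 * c := by
    have : 2 * c ≤ √β := le_sqrt_of_sq_le (by linarith)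
    rw [div_le_iff₀ (sqrt_pos.2 hβ)]
    nlinarith
  have hlin := add_mul_le_of_vertex_bounds (by nlinarith) hβ hs hsr hr hrs h₁ h₂
  rw [hsin3, sin_two_mul]
  linarith [mul_le_mul_of_nonneg_left hlin hsin.le]
end

section
/- Let a = 2cos ψ with 0 < ψ < π/2 and let b > 0 satisfy (a+b)³ = (1 + ab + b)². Then the degree-5 polynomial k(z) = (z² − az + 1)(1 + bz + bz² + z³) has all ratios c_j²/(c_{j+1}c_{j-1}) of its coefficients equal to β := (a+b)^{1/2}, has e^{i(π−ψ)} as a root, and β satisfies β³ − (1+a)β² − 1 + a + a² = 0. -/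
/-- Coefficients of `k = (z² + az + 1)(1 + bz + bz² + z³)`. -/
def stmt14c (a b : ℝ) : ℕ → ℝ := fun j =>
  if j = 0 then 1 else if j = 1 then a + b
  else if j = 2 then 1 + b + a * b else if j = 3 then 1 + b + a * b
  else if j = 4 then a + b else if j = 5 then 1 else 0

/- Since `cos (π - ψ) = -cos ψ`, the point `e^{i(π-ψ)}` is a root of the quadratic factor.
With `β = √(a + b)`, positivity of `a` and `b` lets one take the square root of the relation,
giving `1 + b + ab = β³`; the coefficients of `k` are then `1, β², β³, β³, β², 1`, so every ratio
`c_j² / (c_{j+1} c_{j-1})` is `β`, and the cubic for `β` is a linear combination of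
`a + b = β²` and `1 + b + ab = β³`. -/

lemma mul_sum_stmt14c (a b : ℝ) (z : ℂ) :
    (z ^ 2 + (a : ℂ) * z + 1) * (1 + (b : ℂ) * z + (b : ℂ) * z ^ 2 + z ^ 3) =
      ∑ j ∈ Finset.range 6, (stmt14c a b j : ℂ) * z ^ j := by
  simp only [Finset.sum_range_succ, Finset.sum_range_zero, stmt14c]
  push_cast
  norm_num
  ring

lemma Complex.exp_mul_I_sq_sub_two_cos_mul_add_one (θ : ℝ) :
    Complex.exp (θ * Complex.I) ^ 2 - ((2 * Real.cos θ : ℝ) : ℂ) * Complex.exp (θ * Complex.I)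
      + 1 = 0 := by
  have hinv : Complex.exp (θ * Complex.I) * Complex.exp (-θ * Complex.I) = 1 := by
    rw [← Complex.exp_add]; simp
  push_cast
  rw [Complex.cos]
  linear_combination (-1 : ℂ) * hinv

lemma Real.sqrt_pow_three_eq {x y : ℝ} (hx : 0 ≤ x) (hy : 0 ≤ y) (h : x ^ 3 = y ^ 2) :
    Real.sqrt x ^ 3 = y := by
  refine (pow_left_inj₀ (by positivity) hy two_ne_zero).mp ?_
  rw [← pow_mul, mul_comm, pow_mul, Real.sq_sqrt hx, h]

section
variable {a b β : ℝ}

lemma stmt14c_sq_div_eq (h2 : a + b = β ^ 2) (h3 : 1 + b + a * b = β ^ 3) (hβ : β ≠ 0)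
    {j : ℕ} (hj1 : 1 ≤ j) (hj4 : j ≤ 4) :
    stmt14c a b j ^ 2 / (stmt14c a b (j + 1) * stmt14c a b (j - 1)) = β := by
  interval_cases j <;> simp [stmt14c, h2, h3] <;> field_simp

lemma cubic_of_sq_of_cube (h2 : a + b = β ^ 2) (h3 : 1 + b + a * b = β ^ 3) :
    β ^ 3 - (1 + a) * β ^ 2 - 1 + a + a ^ 2 = 0 := by
  linear_combination (-1 : ℝ) * h3 + (1 + a) * h2

end

theorem stmt_14 (ψ b : ℝ) (hψ1 : 0 < ψ) (hψ2 : ψ < Real.pi / 2) (hb : 0 < b)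
    (hrel : (2 * Real.cos ψ + b) ^ 3 = (1 + 2 * Real.cos ψ * b + b) ^ 2) :
    (∀ z : ℂ,
      (z ^ 2 + ((2 * Real.cos ψ : ℝ) : ℂ) * z + 1) *
        (1 + (b : ℂ) * z + (b : ℂ) * z ^ 2 + z ^ 3) =
      ∑ j ∈ Finset.range 6, ((stmt14c (2 * Real.cos ψ) b j : ℝ) : ℂ) * z ^ j) ∧
    (∑ j ∈ Finset.range 6, ((stmt14c (2 * Real.cos ψ) b j : ℝ) : ℂ) *
        (Complex.exp (((Real.pi - ψ : ℝ) : ℂ) * Complex.I)) ^ j) = 0 ∧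
    (∀ j, 1 ≤ j → j ≤ 4 →
      (stmt14c (2 * Real.cos ψ) b j) ^ 2 /
        (stmt14c (2 * Real.cos ψ) b (j + 1) * stmt14c (2 * Real.cos ψ) b (j - 1)) =
      Real.sqrt (2 * Real.cos ψ + b)) ∧
    (Real.sqrt (2 * Real.cos ψ + b)) ^ 3 -
        (1 + 2 * Real.cos ψ) * (Real.sqrt (2 * Real.cos ψ + b)) ^ 2 -
        1 + 2 * Real.cos ψ + (2 * Real.cos ψ) ^ 2 = 0 := by
  set a := 2 * Real.cos ψ
  have ha : 0 < a := mul_pos two_pos (Real.cos_pos_of_mem_Ioo ⟨by linarith, hψ2⟩)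
  have hab : 0 < a + b := by positivity
  have h2 : a + b = Real.sqrt (a + b) ^ 2 := (Real.sq_sqrt hab.le).symm
  have h3 : 1 + b + a * b = Real.sqrt (a + b) ^ 3 :=
    (Real.sqrt_pow_three_eq hab.le (by positivity) (by linear_combination hrel)).symm
  have hroot : Complex.exp (((Real.pi - ψ : ℝ) : ℂ) * Complex.I) ^ 2
      + (a : ℂ) * Complex.exp (((Real.pi - ψ : ℝ) : ℂ) * Complex.I) + 1 = 0 := by
    simpa [a, Real.cos_pi_sub] using Complex.exp_mul_I_sq_sub_two_cos_mul_add_one (Real.pi - ψ)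
  refine ⟨mul_sum_stmt14c a b, ?_, fun j => stmt14c_sq_div_eq h2 h3 (by positivity),
    by linear_combination cubic_of_sq_of_cube h2 h3⟩
  rw [← mul_sum_stmt14c, hroot, zero_mul]
end

section
/- Let b > √3, let l ≥ 3 be odd, and N ≥ 2l (possibly N = ∞). Suppose f_{b,l}(−x) ≥ 0 for all x ∈ (0, b⁴), where f_{b,l}(x) = Σ_{j=0}^l x^j b^{−j(j+1)}. Then f_{b,N}(−x) > 0 for all x ∈ (0, b⁴), where f_{b,N}(x) = Σ_{j=0}^N x^j b^{−j(j+1)}. -/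
/-!
Split `f_{b,N}(-x)` after the term of degree `l`. Since `l` is odd, the tail
`Σ_{l < j ≤ N} (-x)^j b^{-j(j+1)}` is an alternating sum starting with a positive term, and its
terms `x^j b^{-j(j+1)}` strictly decrease because `x < b⁴ ≤ b^{2j+2}`; so the tail is positive,
while the head `f_{b,l}(-x)` is nonnegative by hypothesis.
-/

open Finset

section Alternating

variable {α : Type*} [Ring α]

theorem sum_range_succ_neg_one_pow_mul (a : ℕ → α) (n : ℕ) :
    ∑ k ∈ range (n + 1), (-1) ^ k * a k = a 0 - ∑ k ∈ range n, (-1) ^ k * a (k + 1) := by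
  rw [sum_range_succ', sub_eq_neg_add, ← sum_neg_distrib]
  simp [pow_succ]

variable [PartialOrder α] [IsOrderedRing α]

theorem sum_range_neg_one_pow_mul_mem_Icc {a : ℕ → α} (ha : Antitone a) (h0 : ∀ k, 0 ≤ a k)
    (n : ℕ) : ∑ k ∈ range n, (-1) ^ k * a k ∈ Set.Icc 0 (a 0) := by
  induction n generalizing a with
  | zero => simpa using h0 0
  | succ n ih =>
    obtain ⟨hlo, hhi⟩ := ih (ha.comp_monotone fun _ _ => Nat.succ_le_succ) (fun k => h0 (k + 1))
    rw [sum_range_succ_neg_one_pow_mul]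
    exact ⟨sub_nonneg.2 (hhi.trans (ha (Nat.zero_le 1))), sub_le_self _ hlo⟩

theorem sum_range_succ_neg_one_pow_mul_pos {a : ℕ → α} (ha : Antitone a)
    (h0 : ∀ k, 0 ≤ a k) (h01 : a 1 < a 0) (n : ℕ) :
    0 < ∑ k ∈ range (n + 1), (-1) ^ k * a k := by
  have hshift := (sum_range_neg_one_pow_mul_mem_Icc
    (ha.comp_monotone fun _ _ => Nat.succ_le_succ) (fun k => h0 (k + 1)) n).2
  rw [sum_range_succ_neg_one_pow_mul]
  exact sub_pos.2 (hshift.trans_lt h01)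

end Alternating

theorem pow_succ_div_pow_lt {x b : ℝ} (hx : 0 < x) (hb : 0 < b) {j : ℕ}
    (hxj : x < b ^ (2 * j + 2)) :
    x ^ (j + 1) / b ^ ((j + 1) * (j + 1 + 1)) < x ^ j / b ^ (j * (j + 1)) := by
  have hexp : (j + 1) * (j + 1 + 1) = j * (j + 1) + (2 * j + 2) := by ring
  rw [hexp, pow_add b, pow_succ x, mul_div_mul_comm]
  exact mul_lt_of_lt_one_right (by positivity) ((div_lt_one (by positivity)).2 hxj)

theorem stmt_19_general (b : ℝ) (hb : Real.sqrt 3 < b) (l : ℕ) (hodd : Odd l)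
    (N : ℕ) (hN : 2 * l ≤ N)
    (h : ∀ x : ℝ, 0 < x → x < b ^ 4 →
      0 ≤ ∑ j ∈ Finset.range (l + 1), (-x) ^ j / b ^ (j * (j + 1))) :
    ∀ x : ℝ, 0 < x → x < b ^ 4 →
      0 < ∑ j ∈ Finset.range (N + 1), (-x) ^ j / b ^ (j * (j + 1)) := by
  intro x hx hxb
  have hb1 : 1 < b := (Real.lt_sqrt zero_le_one).2 (by norm_num) |>.trans hb
  set a : ℕ → ℝ := fun k => x ^ (l + 1 + k) / b ^ ((l + 1 + k) * (l + 1 + k + 1))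
  have ha_succ : ∀ k, a (k + 1) < a k := fun k =>
    pow_succ_div_pow_lt (j := l + 1 + k) hx (by positivity)
      (hxb.trans_le (pow_le_pow_right₀ hb1.le (by omega)))
  have htail (k : ℕ) :
      (-x) ^ (l + 1 + k) / b ^ ((l + 1 + k) * (l + 1 + k + 1)) = (-1) ^ k * a k := by
    rw [neg_pow, pow_add, (hodd.add_one).neg_one_pow, one_mul, mul_div_assoc]
  have hl : 0 < l := hodd.pos
  obtain ⟨m, hm⟩ : ∃ m, N + 1 = (l + 1) + (m + 1) := ⟨N - l - 1, by omega⟩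
  rw [hm, sum_range_add]
  refine add_pos_of_nonneg_of_pos (h x hx hxb) ?_
  simp_rw [htail]
  exact sum_range_succ_neg_one_pow_mul_pos (antitone_nat_of_succ_le fun k => (ha_succ k).le)
    (fun k => by positivity) (ha_succ 0) m

theorem stmt_19 (b : ℝ) (hb : Real.sqrt 3 < b) (l : ℕ) (hl : 3 ≤ l) (hodd : Odd l)
    (N : ℕ) (hN : 2 * l ≤ N)
    (h : ∀ x : ℝ, 0 < x → x < b ^ 4 →
      0 ≤ ∑ j ∈ Finset.range (l + 1), (-x) ^ j / b ^ (j * (j + 1))) :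
    ∀ x : ℝ, 0 < x → x < b ^ 4 →
      0 < ∑ j ∈ Finset.range (N + 1), (-x) ^ j / b ^ (j * (j + 1)) :=
  stmt_19_general b hb l hodd N hN h
end
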